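/- Let d be a homogeneous derivation of degree p ∈ (1/2)ℤ, p ≠ 0, from tsns to tsns⊗tsns (with its (1/2)ℤ-grading). Then d is an inner derivation; explicitly, d = u_inn where u = (1/p)·d(L_0). -/

import Mathlib

open Finsupp

/-- Basis indices of the twisted `N = 1` Schrödinger–Neveu–Schwarz algebra.
`L n` is `L_n` (`n ∈ ℤ`), `G k` is `G_{k+1/2}` (`k ∈ ℤ`),
`Y k` is `Y_{k/2}` and `M k` is `M_{k/2}` (`k ∈ ℤ`, so `k/2` ranges over `(1/2)ℤ`). -/
inductive TIdx : Type
  | L : ℤ → TIdx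
  | G : ℤ → TIdx
  | Y : ℤ → TIdx
  | M : ℤ → TIdx
  deriving DecidableEq

noncomputable section

/-- The underlying vector space of `tsns`: the free `ℂ`-vector space on the basis. -/
abbrev Tsns : Type := TIdx →₀ ℂ

/-- The basis vectors. -/
def bs (i : TIdx) : Tsns := Finsupp.single i 1

/-- The `ℤ₂`-parity of a basis vector. -/
def parity : TIdx → ZMod 2
  | .L _ => 0
  | .G _ => 1
  | .Y k => (k : ZMod 2)
  | .M k => (k : ZMod 2)

/-- The sign `(-1)^{ab}` for parities `a, b`. -/
def sg (a b : ZMod 2) : ℂ := if a = 1 ∧ b = 1 then -1 else 1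

/-- The super-bracket of `tsns` on basis vectors. -/
def brIdx : TIdx → TIdx → Tsns
  | .L n, .L m => ((m : ℂ) - n) • bs (.L (n + m))
  | .L n, .G k => ((k : ℂ) + 1/2 - n/2) • bs (.G (k + n))
  | .G k, .L n => (-((k : ℂ) + 1/2 - n/2)) • bs (.G (k + n))
  | .L n, .Y k => (if (k : ZMod 2) = 0 then ((k : ℂ) - n)/2 else (k : ℂ)/2) • bs (.Y (k + 2*n))
  | .Y k, .L n => (-(if (k : ZMod 2) = 0 then ((k : ℂ) - n)/2 else (k : ℂ)/2)) • bs (.Y (k + 2*n))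
  | .L n, .M k => (if (k : ZMod 2) = 0 then (k : ℂ)/2 else ((k : ℂ) + n)/2) • bs (.M (k + 2*n))
  | .M k, .L n => (-(if (k : ZMod 2) = 0 then (k : ℂ)/2 else ((k : ℂ) + n)/2)) • bs (.M (k + 2*n))
  | .G k, .G l => (2 : ℂ) • bs (.L (k + l + 1))
  | .G l, .Y k => (if (k : ZMod 2) = 0 then ((k : ℂ) - 2*l - 1)/4 else 2) • bs (.Y (k + 2*l + 1))
  | .Y k, .G l => (if (k : ZMod 2) = 0 then -(((k : ℂ) - 2*l - 1)/4) else 2) • bs (.Y (k + 2*l + 1))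
  | .G l, .M k => (if (k : ZMod 2) = 0 then (k : ℂ)/4 else 2) • bs (.M (k + 2*l + 1))
  | .M k, .G l => (if (k : ZMod 2) = 0 then -((k : ℂ)/4) else 2) • bs (.M (k + 2*l + 1))
  | .Y k, .Y l =>
      (if (k : ZMod 2) = 0 then (if (l : ZMod 2) = 0 then ((l : ℂ) - k)/4 else (l : ℂ)/4)
       else (if (l : ZMod 2) = 0 then -((k : ℂ)/4) else 2)) • bs (.M (k + l))
  | _, _ => 0

/-- The super-bracket of `tsns`, as a bilinear map. -/
def brk : Tsns →ₗ[ℂ] Tsns →ₗ[ℂ] Tsns :=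
  Finsupp.lsum ℂ fun i => LinearMap.toSpanSingleton ℂ _
    (Finsupp.lsum ℂ fun j => LinearMap.toSpanSingleton ℂ Tsns (brIdx i j))

/-- `x` is homogeneous of parity `σ`. -/
def IsHom (σ : ZMod 2) (x : Tsns) : Prop := ∀ i ∈ x.support, parity i = σ

/-- The tensor square `tsns ⊗ tsns`, modelled as the free vector space on pairs
of basis indices. -/
abbrev T2 : Type := (TIdx × TIdx) →₀ ℂ

/-- The tensor cube `tsns ⊗ tsns ⊗ tsns`. -/
abbrev T3 : Type := (TIdx × TIdx × TIdx) →₀ ℂ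

/-- The tensor product map `tsns × tsns → tsns ⊗ tsns`. -/
def tp : Tsns →ₗ[ℂ] Tsns →ₗ[ℂ] T2 :=
  Finsupp.lsum ℂ fun i => LinearMap.toSpanSingleton ℂ _
    (Finsupp.lsum ℂ fun j => LinearMap.toSpanSingleton ℂ T2 (Finsupp.single (i, j) 1))

/-- The tensor product map `tsns × tsns × tsns → tsns ⊗ tsns ⊗ tsns`. -/
def t3 : Tsns →ₗ[ℂ] Tsns →ₗ[ℂ] Tsns →ₗ[ℂ] T3 :=
  Finsupp.lsum ℂ fun i => LinearMap.toSpanSingleton ℂ _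
    (Finsupp.lsum ℂ fun j => LinearMap.toSpanSingleton ℂ _
      (Finsupp.lsum ℂ fun k => LinearMap.toSpanSingleton ℂ T3 (Finsupp.single (i, j, k) 1)))

/-- The adjoint diagonal action of `tsns` on `tsns ⊗ tsns`:
`x ∗ (a ⊗ b) = [x,a] ⊗ b + (-1)^{[x][a]} a ⊗ [x,b]`. -/
def star2 : Tsns →ₗ[ℂ] T2 →ₗ[ℂ] T2 :=
  Finsupp.lsum ℂ fun i => LinearMap.toSpanSingleton ℂ _
    (Finsupp.lsum ℂ fun p => LinearMap.toSpanSingleton ℂ T2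
      (tp (brIdx i p.1) (bs p.2) + sg (parity i) (parity p.1) • tp (bs p.1) (brIdx i p.2)))

/-- The adjoint diagonal action of `tsns` on `tsns ⊗ tsns ⊗ tsns`. -/
def star3 : Tsns →ₗ[ℂ] T3 →ₗ[ℂ] T3 :=
  Finsupp.lsum ℂ fun i => LinearMap.toSpanSingleton ℂ _
    (Finsupp.lsum ℂ fun t => LinearMap.toSpanSingleton ℂ T3
      (t3 (brIdx i t.1) (bs t.2.1) (bs t.2.2)
        + sg (parity i) (parity t.1) • t3 (bs t.1) (brIdx i t.2.1) (bs t.2.2)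
        + (sg (parity i) (parity t.1) * sg (parity i) (parity t.2.1)) •
            t3 (bs t.1) (bs t.2.1) (brIdx i t.2.2)))

/-- The super-twist map `τ(x ⊗ y) = (-1)^{[x][y]} y ⊗ x`. -/
def tau : T2 →ₗ[ℂ] T2 :=
  Finsupp.lsum ℂ fun p => LinearMap.toSpanSingleton ℂ T2
    (sg (parity p.1) (parity p.2) • Finsupp.single (p.2, p.1) 1)

/-- The super-cyclic map `ξ(x₁ ⊗ x₂ ⊗ x₃) = (-1)^{[x₁]([x₂]+[x₃])} x₂ ⊗ x₃ ⊗ x₁`. -/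
def xi : T3 →ₗ[ℂ] T3 :=
  Finsupp.lsum ℂ fun t => LinearMap.toSpanSingleton ℂ T3
    (sg (parity t.1) (parity t.2.1 + parity t.2.2) • Finsupp.single (t.2.1, t.2.2, t.1) 1)

/-- `Im(1⊗1 - τ) ⊆ tsns ⊗ tsns`. -/
def ImSkew : Submodule ℂ T2 := LinearMap.range (LinearMap.id - tau)

/-- `ℂ M₀ ⊗ M₀`, the tensor square of the center. -/
def CC : Submodule ℂ T2 := Submodule.span ℂ {Finsupp.single (TIdx.M 0, TIdx.M 0) 1}

/-- The `(1/2)ℤ`-degree of a basis vector, recorded in half-units (i.e. twice the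
degree, an integer). -/
def hdeg : TIdx → ℤ
  | .L n => 2*n
  | .G k => 2*k + 1
  | .Y k => k
  | .M k => k

/-- The degree (in half-units) of a basis vector of the tensor square. -/
def hdeg2 (p : TIdx × TIdx) : ℤ := hdeg p.1 + hdeg p.2

/-- `d : tsns → tsns ⊗ tsns` is a homogeneous derivation of `ℤ₂`-parity `π`:
`d [x,y] = (-1)^{[d][x]} x ∗ d y - (-1)^{[y]([d]+[x])} y ∗ d x`
(stated on homogeneous basis vectors). -/
def IsDerP (π : ZMod 2) (d : Tsns →ₗ[ℂ] T2) : Prop :=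
  ∀ i j : TIdx, d (brk (bs i) (bs j)) =
    sg π (parity i) • star2 (bs i) (d (bs j))
      - sg (parity j) (π + parity i) • star2 (bs j) (d (bs i))

/-- An even derivation `tsns → tsns ⊗ tsns`. -/
def IsDer2 (d : Tsns →ₗ[ℂ] T2) : Prop := IsDerP 0 d

/-- The special derivations `d^♮` on basis vectors (parameters `α, α†, β, β†`). -/
def dnatB (a a' b b' : ℂ) : TIdx → T2
  | .L n => (a * n) • Finsupp.single (.M 0, .M (2*n)) 1
      + (a' * n) • Finsupp.single (.M (2*n), .M 0) 1
  | .G k => (a * ((k : ℂ) + 1/2)) • Finsupp.single (.M 0, .M (2*k+1)) 1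
      + (a' * ((k : ℂ) + 1/2)) • Finsupp.single (.M (2*k+1), .M 0) 1
  | .Y k => b • Finsupp.single (.M 0, .Y k) 1 + b' • Finsupp.single (.Y k, .M 0) 1
  | .M k => (2*b) • Finsupp.single (.M 0, .M k) 1 + (2*b') • Finsupp.single (.M k, .M 0) 1

/-- The special derivations `d^♮ : tsns → tsns ⊗ tsns`. -/
def dnat (a a' b b' : ℂ) : Tsns →ₗ[ℂ] T2 :=
  Finsupp.lsum ℂ fun i => LinearMap.toSpanSingleton ℂ T2 (dnatB a a' b b' i)

/-- Multiplication by `(-1)^{σ·[u]}` on `tsns ⊗ tsns`. -/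
def twT2 (σ : ZMod 2) : T2 →ₗ[ℂ] T2 :=
  Finsupp.lsum ℂ fun p => LinearMap.toSpanSingleton ℂ T2
    (sg σ (parity p.1 + parity p.2) • Finsupp.single p 1)

/-- The coboundary `Δ_r (x) = (-1)^{[r][x]} x ∗ r`. -/
def Δr (r : T2) : Tsns →ₗ[ℂ] T2 :=
  Finsupp.lsum ℂ fun i => LinearMap.toSpanSingleton ℂ T2 (star2 (bs i) (twT2 (parity i) r))

/-- The embedding `tsns ⊗ (tsns ⊗ tsns) → tsns ⊗ tsns ⊗ tsns`. -/
def t13 : Tsns →ₗ[ℂ] T2 →ₗ[ℂ] T3 :=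
  Finsupp.lsum ℂ fun i => LinearMap.toSpanSingleton ℂ _
    (Finsupp.lsum ℂ fun q => LinearMap.toSpanSingleton ℂ T3 (Finsupp.single (i, q.1, q.2) 1))

/-- `1 ⊗ D : tsns ⊗ tsns → tsns ⊗ tsns ⊗ tsns` for an (even) linear map `D`. -/
def oneTensor (D : Tsns →ₗ[ℂ] T2) : T2 →ₗ[ℂ] T3 :=
  Finsupp.lsum ℂ fun p => LinearMap.toSpanSingleton ℂ T3 (t13 (bs p.1) (D (bs p.2)))

/-- The summand of `c(r)` coming from a pair of basis tensors
`p = a_i ⊗ b_i`, `q = a_j ⊗ b_j`. -/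
def cB (p q : TIdx × TIdx) : T3 :=
  sg (parity q.1) (parity p.2) • t3 (brIdx p.1 q.1) (bs p.2) (bs q.2)
    + t3 (bs p.1) (brIdx p.2 q.1) (bs q.2)
    + sg (parity q.1) (parity p.2) • t3 (bs p.1) (bs q.1) (brIdx p.2 q.2)

/-- `c` as a bilinear map. -/
def cY : T2 →ₗ[ℂ] T2 →ₗ[ℂ] T3 :=
  Finsupp.lsum ℂ fun p => LinearMap.toSpanSingleton ℂ _
    (Finsupp.lsum ℂ fun q => LinearMap.toSpanSingleton ℂ T3 (cB p q))

/-- `c(r) = [r¹²,r¹³] + [r¹²,r²³] + [r¹³,r²³]`. -/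
def cr (r : T2) : T3 := cY r r

/-- `(tsns, [·,·], D)` is a Lie superbialgebra: `Im D ⊆ Im(1⊗1−τ)`, the super
co-Jacobi identity holds, and `D` is a 1-cocycle. -/
def IsSuperBialg (D : Tsns →ₗ[ℂ] T2) : Prop :=
  (∀ x : Tsns, D x ∈ ImSkew) ∧
  (∀ x : Tsns,
    oneTensor D (D x) + xi (oneTensor D (D x)) + xi (xi (oneTensor D (D x))) = 0) ∧
  (∀ i j : TIdx, D (brk (bs i) (bs j)) =
    star2 (bs i) (D (bs j)) - sg (parity i) (parity j) • star2 (bs j) (D (bs i)))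

end

lemma brk_bs (i j : TIdx) : brk (bs i) (bs j) = brIdx i j := by
  simp [brk, bs, Finsupp.lsum_single, LinearMap.toSpanSingleton_apply]

lemma tp_bs (i j : TIdx) : tp (bs i) (bs j) = Finsupp.single (i, j) 1 := by
  simp [tp, bs, Finsupp.lsum_single, LinearMap.toSpanSingleton_apply]

lemma sg_zero_left (b : ZMod 2) : sg 0 b = 1 := by
  simp [sg]

lemma sg_zero_right (a : ZMod 2) : sg a 0 = 1 := by
  simp [sg]

lemma sg_comm (a b : ZMod 2) : sg a b = sg b a := by
  simp [sg, and_comm]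

lemma brIdx_L_zero_left (i : TIdx) : brIdx (.L 0) i = ((hdeg i : ℂ) / 2) • bs i := by
  cases i with
  | L n => simp only [brIdx, hdeg]; push_cast; ring_nf
  | G k => simp only [brIdx, hdeg]; push_cast; ring_nf
  | Y k => simp only [brIdx, hdeg]; split_ifs <;> push_cast <;> ring_nf
  | M k => simp only [brIdx, hdeg]; split_ifs <;> push_cast <;> ring_nf

lemma star2_bs_single (i : TIdx) (p : TIdx × TIdx) (c : ℂ) :
    star2 (bs i) (Finsupp.single p c) =
      c • (tp (brIdx i p.1) (bs p.2) + sg (parity i) (parity p.1) • tp (bs p.1) (brIdx i p.2)) := by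
  simp [star2, bs, Finsupp.lsum_single, LinearMap.toSpanSingleton_apply]

lemma star2_L_zero_single (p : TIdx × TIdx) (c : ℂ) :
    star2 (bs (.L 0)) (Finsupp.single p c) = ((hdeg2 p : ℂ) / 2) • Finsupp.single p c := by
  rw [star2_bs_single, brIdx_L_zero_left, brIdx_L_zero_left]
  simp only [map_smul, LinearMap.smul_apply, tp_bs, parity, sg_zero_left, one_smul, hdeg2,
    smul_add, Finsupp.smul_single, Prod.mk.eta, smul_eq_mul, mul_one]
  rw [← Finsupp.single_add]
  congr 1
  push_cast
  ring

lemma star2_L_zero_of_hdeg2_eq {x : T2} {m : ℤ} (hx : ∀ p ∈ x.support, hdeg2 p = m) :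
    star2 (bs (.L 0)) x = ((m : ℂ) / 2) • x := by
  conv_lhs => rw [← Finsupp.sum_single x]
  conv_rhs => rw [← Finsupp.sum_single x]
  rw [map_finsuppSum, Finsupp.smul_sum]
  exact Finsupp.sum_congr fun p hp => by rw [star2_L_zero_single, hx p hp]

/-- The derivation rule for the pair `(L₀, xᵢ)`: both `L₀`-terms are scalars, and their
difference is the degree `p = q/2` of `d`. -/
lemma IsDerP.sg_smul_star2_L_zero {π : ZMod 2} {d : Tsns →ₗ[ℂ] T2} (hder : IsDerP π d)
    {q : ℤ} (hd : ∀ i : TIdx, ∀ p ∈ (d (bs i)).support, hdeg2 p = hdeg i + q) (i : TIdx) :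
    sg (parity i) π • star2 (bs i) (d (bs (.L 0))) = ((q : ℂ) / 2) • d (bs i) := by
  have h := hder (.L 0) i
  rw [brk_bs, brIdx_L_zero_left, map_smul, star2_L_zero_of_hdeg2_eq (hd i),
    show parity (.L 0) = 0 from rfl, sg_zero_right, add_zero, one_smul, eq_sub_iff_add_eq] at h
  calc sg (parity i) π • star2 (bs i) (d (bs (.L 0)))
      = (((hdeg i + q : ℤ) : ℂ) / 2 - (hdeg i : ℂ) / 2) • d (bs i) := by
        rw [sub_smul, ← h, add_sub_cancel_left]
    _ = ((q : ℂ) / 2) • d (bs i) := by push_cast; ring_nf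

/-- a homogeneous derivation `d : tsns → tsns ⊗ tsns` of nonzero degree
`p = q/2 ∈ (1/2)ℤ` (degrees are recorded in half-units `q ∈ ℤ`) is inner:
`d = u_inn` with `u = (1/p)·d(L₀)`. -/
theorem nonzero_degree_derivation_is_inner (q : ℤ) (hq : q ≠ 0)
    (d : Tsns →ₗ[ℂ] T2) (hder : IsDerP (q : ZMod 2) d)
    (hdeg : ∀ i : TIdx, ∀ p ∈ (d (bs i)).support, hdeg2 p = hdeg i + q) :
    ∀ i : TIdx, d (bs i) =
      sg (q : ZMod 2) (parity i) • star2 (bs i) ((2 / (q : ℂ)) • d (bs (TIdx.L 0))) := by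
  intro i
  have hq_inv : (2 / (q : ℂ)) * ((q : ℂ) / 2) = 1 := by
    field_simp [Int.cast_ne_zero.mpr hq]
  rw [map_smul, smul_comm, sg_comm, hder.sg_smul_star2_L_zero hdeg i, smul_smul, hq_inv,
    one_smul]
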